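/- Let m, e, n be positive integers with m > 2 odd, 1 ≤ e ≤ 3^m − 2, and 3^n · e ≡ 4 (mod 3^m − 1). Then the ternary cyclic code C_{(1,e)} has parameters [3^m − 1, 3^m − 1 − 2m, 4]; that is, its F_3-dimension equals 3^m − 1 − 2m, every nonzero codeword has Hamming weight at least 4, and there exists a nonzero codeword of Hamming weight exactly 4. -/

import Mathlib

/-- The parity-check linear map `c ↦ ∑ i, c i • α ^ (v * i)` on `F₃^(3^m - 1)`. -/
noncomputable def parityMap (m v : ℕ) (α : GaloisField 3 m) :
    (Fin (3 ^ m - 1) → ZMod 3) →ₗ[ZMod 3] GaloisField 3 m where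
  toFun c := ∑ i, c i • α ^ (v * (i : ℕ))
  map_add' x y := by simp [add_smul, Finset.sum_add_distrib]
  map_smul' r x := by simp [smul_smul, Finset.smul_sum]

/-- The ternary cyclic code `C_{(1,e)}`: all vectors `c ∈ F₃^(3^m-1)` with
`∑ i, c i • α ^ i = 0` and `∑ i, c i • α ^ (e * i) = 0`. -/
noncomputable def ternaryCyclicCode (m e : ℕ) (α : GaloisField 3 m) :
    Submodule (ZMod 3) (Fin (3 ^ m - 1) → ZMod 3) :=
  LinearMap.ker (parityMap m 1 α) ⊓ LinearMap.ker (parityMap m e α)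

section Aux

lemma TCC.core2 {F : Type*} [Field F] (h3 : (3:F) = 0) {x y A : F} (hy : y ≠ 0) (hxy : x ≠ y)
    (hA : A = 1 ∨ A = -1) (e1 : x + A*y = 0) (e2 : x^4 + A*y^4 = 0) : False := by
  rcases hA with rfl | rfl
  · have h : y ^ 4 = 0 := by
      linear_combination (x^3 - x^2*y + x*y^2 - y^3) * e1 - e2 + y^4 * h3
    exact hy (pow_eq_zero_iff (n := 4) (by norm_num)|>.mp h)
  · exact hxy (by linear_combination e1)

lemma TCC.core3 {F : Type*} [Field F] (h3 : (3:F) = 0) (hns : ¬ IsSquare (-1:F)) {x y z A B : F}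
    (hx : x ≠ 0) (hy : y ≠ 0) (hxy : x ≠ y)
    (hA : A = 1 ∨ A = -1) (hB : B = 1 ∨ B = -1)
    (e1 : x + A*y + B*z = 0) (e2 : x^4 + A*y^4 + B*z^4 = 0) : False := by
  have hB2 : B * B = 1 := by rcases hB with rfl | rfl <;> norm_num
  have hz : B * z = -(x + A*y) := by linear_combination e1
  have h4 : (B*z)^4 = (-(x+A*y))^4 := by rw [hz]
  have hz4 : z^4 = (x + A*y)^4 := by linear_combination h4 - z^4*(B*B+1)*hB2
  rw [hz4] at e2
  rcases hA with rfl | rfl <;> rcases hB with rfl | rfl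
  · have h : (x - y)^4 = 0 := by linear_combination -e2 + (x^4+4*x^2*y^2+y^4)*h3
    exact hxy (by linear_combination (pow_eq_zero_iff (n := 4) (by norm_num)).mp h)
  · have h : x*y*(x^2+y^2) = 0 := by
      linear_combination -e2 + (-(x^3*y) - 2*x^2*y^2 - x*y^3)*h3
    have h2 : x^2 + y^2 = 0 := by
      rcases mul_eq_zero.mp h with h' | h'
      · rcases mul_eq_zero.mp h' with h'' | h''
        · exact absurd h'' hx
        · exact absurd h'' hy
      · exact h'
    exact hns ⟨x * y⁻¹, by field_simp; linear_combination -h2⟩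
  · have h : x*(y-x)*((y-x)^2+x^2) = 0 := by
      linear_combination -e2 + (x^2*y^2 - x*y^3)*h3
    have h2 : (y-x)^2 + x^2 = 0 := by
      rcases mul_eq_zero.mp h with h' | h'
      · rcases mul_eq_zero.mp h' with h'' | h''
        · exact absurd h'' hx
        · exact absurd (by linear_combination -h'' : x = y) hxy
      · exact h'
    exact hns ⟨(y-x) * x⁻¹, by field_simp; linear_combination -h2⟩
  · have h : y*(y-x)*((y+x)^2+x^2) = 0 := by
      linear_combination e2 + (y^4 - x*y^3 + 2*x^2*y^2 - 2*x^3*y)*h3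
    have h2 : (y+x)^2 + x^2 = 0 := by
      rcases mul_eq_zero.mp h with h' | h'
      · rcases mul_eq_zero.mp h' with h'' | h''
        · exact absurd h'' hy
        · exact absurd (by linear_combination -h'' : x = y) hxy
      · exact h'
    exact hns ⟨(y+x) * x⁻¹, by field_simp; linear_combination -h2⟩

lemma TCC.core2e {F : Type*} [Field F] (h3 : (3:F) = 0) {x y ε₁ ε₂ : F}
    (hy : y ≠ 0) (hxy : x ≠ y) (h1 : ε₁ = 1 ∨ ε₁ = -1) (h2 : ε₂ = 1 ∨ ε₂ = -1)
    (e1 : ε₁*x + ε₂*y = 0) (e2 : ε₁*x^4 + ε₂*y^4 = 0) : False := by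
  rcases h1 with rfl | rfl <;> rcases h2 with rfl | rfl
  · exact TCC.core2 h3 hy hxy (Or.inl rfl) (by linear_combination e1) (by linear_combination e2)
  · exact TCC.core2 h3 hy hxy (Or.inr rfl) (by linear_combination e1) (by linear_combination e2)
  · exact TCC.core2 h3 hy hxy (Or.inr rfl) (by linear_combination -e1) (by linear_combination -e2)
  · exact TCC.core2 h3 hy hxy (Or.inl rfl) (by linear_combination -e1) (by linear_combination -e2)

lemma TCC.core3e {F : Type*} [Field F] (h3 : (3:F) = 0) (hns : ¬ IsSquare (-1:F))
    {x y z ε₁ ε₂ ε₃ : F} (hx : x ≠ 0) (hy : y ≠ 0) (hxy : x ≠ y)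
    (h1 : ε₁ = 1 ∨ ε₁ = -1) (h2 : ε₂ = 1 ∨ ε₂ = -1) (h3' : ε₃ = 1 ∨ ε₃ = -1)
    (e1 : ε₁*x + ε₂*y + ε₃*z = 0) (e2 : ε₁*x^4 + ε₂*y^4 + ε₃*z^4 = 0) : False := by
  rcases h1 with rfl | rfl <;> rcases h2 with rfl | rfl <;> rcases h3' with rfl | rfl
  · exact TCC.core3 (x := x) (y := y) (z := z) h3 hns hx hy hxy (Or.inl rfl) (Or.inl rfl)
      (by linear_combination e1) (by linear_combination e2)
  · exact TCC.core3 (x := x) (y := y) (z := z) h3 hns hx hy hxy (Or.inl rfl) (Or.inr rfl)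
      (by linear_combination e1) (by linear_combination e2)
  · exact TCC.core3 (x := x) (y := y) (z := z) h3 hns hx hy hxy (Or.inr rfl) (Or.inl rfl)
      (by linear_combination e1) (by linear_combination e2)
  · exact TCC.core3 (x := x) (y := y) (z := z) h3 hns hx hy hxy (Or.inr rfl) (Or.inr rfl)
      (by linear_combination e1) (by linear_combination e2)
  · exact TCC.core3 (x := x) (y := y) (z := z) h3 hns hx hy hxy (Or.inr rfl) (Or.inr rfl)
      (by linear_combination -e1) (by linear_combination -e2)
  · exact TCC.core3 (x := x) (y := y) (z := z) h3 hns hx hy hxy (Or.inr rfl) (Or.inl rfl)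
      (by linear_combination -e1) (by linear_combination -e2)
  · exact TCC.core3 (x := x) (y := y) (z := z) h3 hns hx hy hxy (Or.inl rfl) (Or.inr rfl)
      (by linear_combination -e1) (by linear_combination -e2)
  · exact TCC.core3 (x := x) (y := y) (z := z) h3 hns hx hy hxy (Or.inl rfl) (Or.inl rfl)
      (by linear_combination -e1) (by linear_combination -e2)

lemma TCC.zmod3_cases' : ∀ t : ZMod 3, t ≠ 0 → t = 1 ∨ t = -1 := by decide

lemma TCC.smul_sign {F : Type*} [Field F] [Module (ZMod 3) F] {t : ZMod 3} (ht : t ≠ 0) :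
    ∃ ε : F, (ε = 1 ∨ ε = -1) ∧ ∀ x : F, t • x = ε * x := by
  rcases TCC.zmod3_cases' t ht with rfl | rfl
  · exact ⟨1, Or.inl rfl, fun x => by rw [one_smul, one_mul]⟩
  · exact ⟨-1, Or.inr rfl, fun x => by rw [neg_one_smul, neg_one_mul]⟩

lemma TCC.Lpair {N : ℕ} {i j i' j' : Fin N} {a b a' b' : ZMod 3} (hij : i ≠ j) (hij' : i' ≠ j')
    (ha : a ≠ 0) (hb : b ≠ 0) (ha' : a' ≠ 0) (hb' : b' ≠ 0)
    (h : (Pi.single i a + Pi.single j b : Fin N → ZMod 3)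
        = (Pi.single i' a' + Pi.single j' b' : Fin N → ZMod 3)) :
    (i = i' ∧ a = a' ∧ j = j' ∧ b = b') ∨ (i = j' ∧ a = b' ∧ j = i' ∧ b = a') := by
  have Hi := congrFun h i
  have Hj := congrFun h j
  simp only [Pi.add_apply, Pi.single_apply, if_pos rfl] at Hi Hj
  rw [if_neg hij, add_zero] at Hi
  rw [if_neg (Ne.symm hij), zero_add] at Hj
  by_cases h1 : i = i'
  · have h2 : ¬ (i = j') := fun hh => hij' (h1 ▸ hh ▸ rfl : i' = j')
    rw [if_pos h1, if_neg h2, add_zero] at Hi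
    have h3 : ¬ (j = i') := fun hh => hij (h1.trans hh.symm)
    rw [if_neg h3, zero_add] at Hj
    by_cases h4 : j = j'
    · rw [if_pos h4] at Hj
      exact Or.inl ⟨h1, Hi, h4, Hj⟩
    · rw [if_neg h4] at Hj
      exact absurd Hj hb
  · by_cases h2 : i = j'
    · rw [if_neg h1, if_pos h2, zero_add] at Hi
      by_cases h4 : j = j'
      · exact absurd (h2.trans h4.symm) hij
      · rw [if_neg h4, add_zero] at Hj
        by_cases h3 : j = i'
        · rw [if_pos h3] at Hj
          exact Or.inr ⟨h2, Hi, h3, Hj⟩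
        · rw [if_neg h3] at Hj
          exact absurd Hj hb
    · rw [if_neg h1, if_neg h2] at Hi
      exact absurd (by simpa using Hi) ha

lemma TCC.parityMap_apply (m v : ℕ) (α : GaloisField 3 m) (c : Fin (3^m-1) → ZMod 3) :
    parityMap m v α c = ∑ i, c i • α ^ (v * (i : ℕ)) := rfl

lemma TCC.parity_single (m v : ℕ) (α : GaloisField 3 m) (i : Fin (3^m-1)) (r : ZMod 3) :
    parityMap m v α (Pi.single i r) = r • α ^ (v * (i:ℕ)) := by
  rw [TCC.parityMap_apply, Finset.sum_eq_single i]
  · simp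
  · intro j _ hj
    rw [Pi.single_eq_of_ne hj, zero_smul]
  · intro hi; exact absurd (Finset.mem_univ i) hi

lemma TCC.norm_pair_le {N : ℕ} (i j : Fin N) (a b : ZMod 3) :
    hammingNorm (Pi.single i a + Pi.single j b : Fin N → ZMod 3) ≤ 2 := by
  have hsub : ({k | (Pi.single i a + Pi.single j b : Fin N → ZMod 3) k ≠ 0} : Finset (Fin N))
      ⊆ {i, j} := by
    intro k hk
    simp only [Finset.mem_filter, Finset.mem_univ, true_and] at hk
    by_contra hmem
    simp only [Finset.mem_insert, Finset.mem_singleton, not_or] at hmem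
    exact hk (by rw [Pi.add_apply, Pi.single_eq_of_ne hmem.1, Pi.single_eq_of_ne hmem.2,
      add_zero])
  calc hammingNorm (Pi.single i a + Pi.single j b : Fin N → ZMod 3)
      ≤ ({i, j} : Finset (Fin N)).card := by unfold hammingNorm; exact Finset.card_le_card hsub
    _ ≤ 2 := by
        apply le_trans (Finset.card_insert_le i {j})
        simp

lemma TCC.norm_sub_le_four {N : ℕ} (x y : Fin N → ZMod 3) (hx : hammingNorm x ≤ 2)
    (hy : hammingNorm y ≤ 2) : hammingNorm (x - y) ≤ 4 := by
  have := hammingDist_triangle x 0 y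
  rw [hammingDist_zero_right, hammingDist_comm 0 y, hammingDist_zero_right] at this
  rw [sub_eq_neg_add, ← hammingDist_eq_hammingNorm, hammingDist_comm]
  omega

lemma TCC.zmod3_pow_3n (n : ℕ) (t : ZMod 3) : t ^ (3^n) = t := by
  induction n with
  | zero => rw [pow_zero, pow_one]
  | succ k ih => rw [pow_succ, pow_mul, ih, ZMod.pow_card]

lemma TCC.frob_sum (m n : ℕ) {ι : Type*} (S : Finset ι) (f : ι → GaloisField 3 m) :
    (∑ i ∈ S, f i) ^ (3^n) = ∑ i ∈ S, (f i) ^ (3^n) := by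
  have := map_sum (iterateFrobenius (GaloisField 3 m) 3 n) f S
  simpa only [iterateFrobenius_def] using this

end Aux

theorem stmt13 (m e n : ℕ) (hm : 2 < m) (hodd : Odd m) (hn : 0 < n)
    (he1 : 1 ≤ e) (he2 : e ≤ 3 ^ m - 2)
    (hcong : 3 ^ n * e ≡ 4 [MOD 3 ^ m - 1])
    (α : (GaloisField 3 m)ˣ) (hα : ∀ u : (GaloisField 3 m)ˣ, u ∈ Subgroup.zpowers α) :
    Module.finrank (ZMod 3) (ternaryCyclicCode m e (α : GaloisField 3 m))
        = 3 ^ m - 1 - 2 * m ∧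
      (∀ c ∈ ternaryCyclicCode m e (α : GaloisField 3 m), c ≠ 0 → 4 ≤ hammingNorm c) ∧
      (∃ c ∈ ternaryCyclicCode m e (α : GaloisField 3 m), c ≠ 0 ∧ hammingNorm c = 4) := by
  classical
  have hm0 : m ≠ 0 := by omega
  have hN26 : 26 ≤ 3^m - 1 := by
    have h27 : (27:ℕ) ≤ 3^m := by
      calc (27:ℕ) = 3^3 := by norm_num
        _ ≤ 3^m := Nat.pow_le_pow_right (by norm_num) hm
    omega
  letI : Fintype (GaloisField 3 m) := Fintype.ofFinite _
  set F := GaloisField 3 m with hF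
  set a : F := (α : F) with ha
  have hcardF : Fintype.card F = 3^m := by
    rw [← Nat.card_eq_fintype_card]; exact GaloisField.card 3 m hm0
  have h3 : (3 : F) = 0 := by
    exact_mod_cast CharP.cast_eq_zero F 3
  have hmod4 : 3^m % 4 = 3 := by
    obtain ⟨k, rfl⟩ := hodd
    rw [pow_succ, pow_mul, Nat.mul_mod, Nat.pow_mod]
    norm_num
  have hns : ¬ IsSquare (-1 : F) := by
    rw [FiniteField.isSquare_neg_one_iff, hcardF]
    simp [hmod4]
  have haneq : a ≠ 0 := α.ne_zero
  have horderU : orderOf α = 3^m - 1 := by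
    rw [orderOf_eq_card_of_forall_mem_zpowers hα,
      Nat.card_eq_fintype_card, Fintype.card_units, hcardF]
  have hpowmod : ∀ s t : ℕ, s ≡ t [MOD 3^m - 1] → a^s = a^t := by
    intro s t hst
    have h : α ^ s = α ^ t := by
      rw [pow_eq_pow_iff_modEq, horderU]; exact hst
    calc a^s = ((α^s : Fˣ) : F) := by rw [Units.val_pow_eq_pow_val]
      _ = ((α^t : Fˣ) : F) := by rw [h]
      _ = a^t := by rw [Units.val_pow_eq_pow_val]
  have hinj : ∀ i j : Fin (3^m-1), a^(i:ℕ) = a^(j:ℕ) → i = j := by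
    intro i j hij
    have h : α ^ (i:ℕ) = α ^ (j:ℕ) := by
      apply Units.ext
      rw [Units.val_pow_eq_pow_val, Units.val_pow_eq_pow_val]
      exact hij
    rw [pow_eq_pow_iff_modEq, horderU, Nat.ModEq,
      Nat.mod_eq_of_lt i.2, Nat.mod_eq_of_lt j.2] at h
    exact Fin.ext h
  have hpm : ∀ u : F, u ≠ 0 → IsSquare u ∨ IsSquare (-u) := by
    intro u hu
    by_cases h : IsSquare u
    · exact Or.inl h
    · right
      have h1 : quadraticChar F u = -1 := quadraticChar_neg_one_iff_not_isSquare.mpr h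
      have h2 : quadraticChar F (-1) = -1 := quadraticChar_neg_one_iff_not_isSquare.mpr hns
      have h4 : quadraticChar F (-u) = 1 := by
        rw [show (-u) = (-1) * u by ring, map_mul, h1, h2]; norm_num
      exact (quadraticChar_one_iff_isSquare (neg_ne_zero.mpr hu)).mp h4
  have hpow4 : ∀ i : ℕ, a^(4*i) = (a^i)^4 := fun i => by rw [mul_comm, pow_mul]
  -- kernel equality
  have hker4 : LinearMap.ker (parityMap m e a) = LinearMap.ker (parityMap m 4 a) := by
    have key : ∀ c : Fin (3^m-1) → ZMod 3,
        (parityMap m e a c) ^ (3^n) = parityMap m 4 a c := by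
      intro c
      rw [TCC.parityMap_apply, TCC.parityMap_apply, TCC.frob_sum]
      apply Finset.sum_congr rfl
      intro i _
      rw [Algebra.smul_def, Algebra.smul_def, mul_pow, ← map_pow, TCC.zmod3_pow_3n, ← pow_mul]
      congr 1
      rw [show e * (i:ℕ) * 3^n = 3^n * e * (i:ℕ) by ring]
      exact hpowmod _ _ (hcong.mul_right _)
    ext c
    rw [LinearMap.mem_ker, LinearMap.mem_ker]
    constructor
    · intro h
      rw [← key c, h, zero_pow (by positivity)]
    · intro h
      have h2 := key c
      rw [h] at h2
      exact pow_eq_zero_iff (by positivity) |>.mp h2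
  -- minimum distance ≥ 4
  have hdist : ∀ c ∈ ternaryCyclicCode m e a, c ≠ 0 → 4 ≤ hammingNorm c := by
    intro c hcmem hc0
    by_contra hlt
    push_neg at hlt
    have hdefc : ternaryCyclicCode m e a
        = LinearMap.ker (parityMap m 1 a) ⊓ LinearMap.ker (parityMap m e a) := rfl
    rw [hdefc, Submodule.mem_inf] at hcmem
    obtain ⟨hc1, hce⟩ := hcmem
    have hc4 : c ∈ LinearMap.ker (parityMap m 4 a) := hker4 ▸ hce
    set s : Finset (Fin (3^m-1)) := Finset.univ.filter (fun i => c i ≠ 0) with hs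
    have hnorm : hammingNorm c = s.card := rfl
    have hmemsig : ∀ i ∈ s, c i ≠ 0 := fun i hi => (Finset.mem_filter.mp hi).2
    have E1 : ∑ i ∈ s, c i • a ^ (1 * (i:ℕ)) = 0 := by
      rw [hs, Finset.sum_filter_of_ne]
      · exact LinearMap.mem_ker.mp hc1
      · intro i _ hne h0
        exact hne (by rw [h0, zero_smul])
    have E4 : ∑ i ∈ s, c i • a ^ (4 * (i:ℕ)) = 0 := by
      rw [hs, Finset.sum_filter_of_ne]
      · exact LinearMap.mem_ker.mp hc4
      · intro i _ hne h0
        exact hne (by rw [h0, zero_smul])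
    have hspos : 0 < s.card := by
      rcases Finset.eq_empty_or_nonempty s with hemp | hne
      · exfalso
        apply hc0
        funext i
        by_contra hci
        have : i ∈ s := Finset.mem_filter.mpr ⟨Finset.mem_univ i, hci⟩
        rw [hemp] at this
        exact absurd this (Finset.notMem_empty i)
      · exact Finset.card_pos.mpr hne
    have hcases : s.card = 1 ∨ s.card = 2 ∨ s.card = 3 := by omega
    rcases hcases with h1 | h2 | h3'
    · obtain ⟨i, hi⟩ := Finset.card_eq_one.mp h1
      rw [hi, Finset.sum_singleton] at E1
      have hci : c i ≠ 0 := hmemsig i (hi ▸ Finset.mem_singleton_self i)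
      rcases smul_eq_zero.mp E1 with h | h
      · exact hci h
      · exact pow_ne_zero _ haneq h
    · obtain ⟨i, j, hij, hs2⟩ := Finset.card_eq_two.mp h2
      rw [hs2, Finset.sum_pair hij] at E1 E4
      have hci : c i ≠ 0 := hmemsig i (hs2 ▸ Finset.mem_insert_self i {j})
      have hcj : c j ≠ 0 := hmemsig j (hs2 ▸ Finset.mem_insert_of_mem (Finset.mem_singleton_self j))
      obtain ⟨ε₁, hε₁, hsm₁⟩ := TCC.smul_sign (F := F) hci
      obtain ⟨ε₂, hε₂, hsm₂⟩ := TCC.smul_sign (F := F) hcj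
      rw [hsm₁, hsm₂] at E1 E4
      simp only [one_mul] at E1
      simp only [hpow4] at E4
      exact TCC.core2e (x := a^(i:ℕ)) (y := a^(j:ℕ)) h3 (pow_ne_zero _ haneq)
        (fun hxy => hij (hinj i j hxy)) hε₁ hε₂ E1 E4
    · obtain ⟨i, j, k, hij, hik, hjk, hs3⟩ := Finset.card_eq_three.mp h3'
      have hnotmem : i ∉ ({j, k} : Finset (Fin (3^m-1))) := by simp [hij, hik]
      rw [hs3, Finset.sum_insert hnotmem, Finset.sum_pair hjk] at E1 E4
      have hci : c i ≠ 0 := hmemsig i (hs3 ▸ Finset.mem_insert_self i {j, k})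
      have hcj : c j ≠ 0 := hmemsig j (hs3 ▸ Finset.mem_insert_of_mem
        (Finset.mem_insert_self j {k}))
      have hck : c k ≠ 0 := hmemsig k (hs3 ▸ Finset.mem_insert_of_mem
        (Finset.mem_insert_of_mem (Finset.mem_singleton_self k)))
      obtain ⟨ε₁, hε₁, hsm₁⟩ := TCC.smul_sign (F := F) hci
      obtain ⟨ε₂, hε₂, hsm₂⟩ := TCC.smul_sign (F := F) hcj
      obtain ⟨ε₃, hε₃, hsm₃⟩ := TCC.smul_sign (F := F) hck
      rw [hsm₁, hsm₂, hsm₃] at E1 E4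
      simp only [one_mul] at E1
      simp only [hpow4] at E4
      exact TCC.core3e (x := a^(i:ℕ)) (y := a^(j:ℕ)) (z := a^(k:ℕ)) h3 hns
        (pow_ne_zero _ haneq) (pow_ne_zero _ haneq)
        (fun hxy => hij (hinj i j hxy)) hε₁ hε₂ hε₃ (by linear_combination E1)
        (by linear_combination E4)
  -- surjectivity of the (1,4) parity-check map
  set Q := (parityMap m 1 a).prod (parityMap m 4 a) with hQ
  set R := LinearMap.range Q with hR
  have hN0 : 0 < 3^m - 1 := by omega
  have hsurj : LinearMap.range Q = ⊤ := by
    have hxx : ∀ x : F, (x, x^4) ∈ R := by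
      intro x
      by_cases hx : x = 0
      · subst hx
        have : ((0:F), (0:F)^4) = (0 : F × F) := by norm_num
        rw [this]; exact R.zero_mem
      · obtain ⟨k, hk⟩ := mem_powers_iff_mem_zpowers.mpr (hα (Units.mk0 x hx))
        have hk' : a ^ k = x := by
          have := congrArg (Units.val) hk
          rw [Units.val_pow_eq_pow_val] at this
          exact this
        refine ⟨Pi.single (⟨k % (3^m-1), Nat.mod_lt _ hN0⟩ : Fin (3^m-1)) 1, ?_⟩
        have e1 : a ^ (1 * (k % (3^m-1))) = x := by
          rw [one_mul, ← hk']
          exact hpowmod _ _ (Nat.mod_modEq k _)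
        have e2 : a ^ (4 * (k % (3^m-1))) = x^4 := by
          rw [← hk', ← pow_mul, mul_comm k 4]
          exact hpowmod _ _ ((Nat.mod_modEq k _).mul_left 4)
        rw [hQ, LinearMap.prod_apply]
        ext
        · show parityMap m 1 a _ = x
          rw [TCC.parity_single, one_smul]; exact e1
        · show parityMap m 4 a _ = x^4
          rw [TCC.parity_single, one_smul]; exact e2
    have h0x4 : ∀ x : F, ((0:F), x^4) ∈ R := by
      intro x
      have h1 := hxx x
      have h2 := hxx (-x)
      have key : ((x, x^4) + ((-x), (-x)^4)) + ((x, x^4) + ((-x), (-x)^4))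
          = ((0:F), x^4) := by
        rw [Prod.mk_add_mk, Prod.mk_add_mk, Prod.mk.injEq]
        exact ⟨by ring, by linear_combination x^4 * h3⟩
      rw [← key]
      exact R.add_mem (R.add_mem h1 h2) (R.add_mem h1 h2)
    have h0sq : ∀ u : F, ((0:F), u^2) ∈ R := by
      intro u
      by_cases hu : u = 0
      · subst hu; rw [show ((0:F), (0:F)^2) = 0 by ext <;> simp]; exact R.zero_mem
      · rcases hpm u hu with ⟨t, ht⟩ | ⟨t, ht⟩
        · rw [show u^2 = t^4 by rw [ht]; ring]
          exact h0x4 t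
        · rw [show u^2 = t^4 by linear_combination (t*t - u) * ht]
          exact h0x4 t
    have h0z : ∀ z : F, ((0:F), z) ∈ R := by
      intro z
      by_cases hz : z = 0
      · subst hz; exact R.zero_mem
      · rcases hpm z hz with ⟨t, ht⟩ | ⟨t, ht⟩
        · rw [show z = t^2 by rw [ht]; ring]
          exact h0sq t
        · have hmem : ((0:F), -z) ∈ R := by
            rw [show -z = t^2 by rw [ht]; ring]
            exact h0sq t
          have := R.neg_mem hmem
          rw [Prod.neg_mk, neg_zero, neg_neg] at this
          exact this
    rw [eq_top_iff]
    rintro ⟨z1, z2⟩ -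
    have : (z1, z2) = ((z1, z1^4) : F × F) + ((0:F), z2 - z1^4) := by
      rw [Prod.mk_add_mk, Prod.mk.injEq]; exact ⟨by ring, by ring⟩
    rw [this]
    exact R.add_mem (hxx z1) (h0z _)
  -- dimension
  have hcode_eq : ternaryCyclicCode m e a = LinearMap.ker Q := by
    have hdefc : ternaryCyclicCode m e a
        = LinearMap.ker (parityMap m 1 a) ⊓ LinearMap.ker (parityMap m e a) := rfl
    rw [hdefc, hker4, hQ, LinearMap.ker_prod]
  have hdim : Module.finrank (ZMod 3) (ternaryCyclicCode m e a) = 3^m - 1 - 2*m := by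
    have hrank := LinearMap.finrank_range_add_finrank_ker Q
    rw [hsurj, finrank_top, Module.finrank_prod, GaloisField.finrank 3 hm0,
      Module.finrank_pi, Fintype.card_fin] at hrank
    rw [hcode_eq]
    omega
  refine ⟨hdim, hdist, ?_⟩
  -- existence of a weight-4 codeword
  set N' := 3^m - 1 with hNdef
  letI : NeZero N' := ⟨by omega⟩
  set off : Fin 4 → Fin N' := fun d => (⟨d.1 + 1, by omega⟩ : Fin N') with hoff
  set V : ((Fin N' × Fin N') ⊕ (Fin N' × Fin 4)) → (Fin N' → ZMod 3) :=
    Sum.elim (fun p => Pi.single p.1 1 + Pi.single p.2 2)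
             (fun p => Pi.single p.1 1 + Pi.single (p.1 + off p.2) 1) with hV
  set D : Finset ((Fin N' × Fin N') ⊕ (Fin N' × Fin 4)) :=
    (Finset.univ.offDiag).disjSum Finset.univ with hD
  have hoffne : ∀ (i : Fin N') (d : Fin 4), i ≠ i + off d := by
    intro i d h
    have h2 : off d = 0 := (left_eq_add).mp h
    have h3' : (off d).val = 0 := by rw [h2]; rfl
    simp only [hoff] at h3'
    omega
  have hcardD : Fintype.card (F × F) < D.card := by
    rw [hD, Finset.card_disjSum, Finset.offDiag_card, Fintype.card_prod, hcardF]
    simp only [Finset.card_univ, Fintype.card_prod, Fintype.card_fin]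
    have h1 : 3^m = N' + 1 := by omega
    rw [h1, show (N'+1)*(N'+1) = N'*N' + 2*N'+1 by ring]
    have hM : N' ≤ N' * N' := Nat.le_mul_of_pos_left N' (by omega)
    generalize N'*N' = M at hM ⊢
    omega
  have h12 : (1 : ZMod 3) ≠ 0 := by decide
  have h22 : (2 : ZMod 3) ≠ 0 := by decide
  have h21 : (2 : ZMod 3) ≠ 1 := by decide
  have hVinj : ∀ p ∈ D, ∀ q ∈ D, V p = V q → p = q := by
    intro p hp q hq hpq
    rcases p with ⟨i, j⟩ | ⟨i, d⟩ <;> rcases q with ⟨i', j'⟩ | ⟨i', d'⟩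
    · rw [hD, Finset.inl_mem_disjSum, Finset.mem_offDiag] at hp hq
      rcases TCC.Lpair hp.2.2 hq.2.2 h12 h22 h12 h22 hpq with ⟨h1, _, h2, _⟩ | ⟨_, hcontra, _, _⟩
      · exact congrArg Sum.inl (Prod.ext h1 h2)
      · exact absurd hcontra.symm h21
    · rw [hD, Finset.inl_mem_disjSum, Finset.mem_offDiag] at hp
      rcases TCC.Lpair hp.2.2 (hoffne i' d') h12 h22 h12 h12 hpq with
        ⟨_, _, _, hcontra⟩ | ⟨_, _, _, hcontra⟩
      · exact absurd hcontra h21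
      · exact absurd hcontra h21
    · rw [hD, Finset.inl_mem_disjSum, Finset.mem_offDiag] at hq
      rcases TCC.Lpair (hoffne i d) hq.2.2 h12 h12 h12 h22 hpq with
        ⟨_, _, _, hcontra⟩ | ⟨_, hcontra, _, _⟩
      · exact absurd hcontra.symm h21
      · exact absurd hcontra.symm h21
    · rcases TCC.Lpair (hoffne i d) (hoffne i' d') h12 h12 h12 h12 hpq with
        ⟨h1, _, h2, _⟩ | ⟨h1, _, h2, _⟩
      · subst h1
        have h3' : off d = off d' := by
          have := h2
          rwa [add_right_inj] at this
        have h4 : d = d' := by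
          have hv : (off d).val = (off d').val := by rw [h3']
          simp only [hoff] at hv
          exact Fin.ext (by omega)
        rw [h4]
      · exfalso
        rw [← h2] at h1
        have h5 : (off d + off d') = 0 := by
          have : i = i + (off d + off d') := by rw [← add_assoc]; exact h1
          exact (left_eq_add).mp this
        have h6 : ((off d + off d') : Fin N').val = 0 := by rw [h5]; rfl
        rw [Fin.add_def] at h6
        simp only [hoff] at h6
        rw [Nat.mod_eq_of_lt (by omega)] at h6
        omega
  obtain ⟨p, hp, q, hq, hpq, hfeq⟩ :=
    Finset.exists_ne_map_eq_of_card_lt_of_maps_to (t := (Finset.univ : Finset (F × F)))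
      (by simpa using hcardD)
      (fun p _ => Finset.mem_univ (((parityMap m 1 a) (V p), (parityMap m e a) (V p))))
  have hmem : V p - V q ∈ ternaryCyclicCode m e a := by
    have h1 : (parityMap m 1 a) (V p) = (parityMap m 1 a) (V q) := congrArg Prod.fst hfeq
    have h2 : (parityMap m e a) (V p) = (parityMap m e a) (V q) := congrArg Prod.snd hfeq
    have hdefc : ternaryCyclicCode m e a
        = LinearMap.ker (parityMap m 1 a) ⊓ LinearMap.ker (parityMap m e a) := rfl
    rw [hdefc, Submodule.mem_inf]
    constructor
    · rw [LinearMap.mem_ker, map_sub, h1, sub_self]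
    · rw [LinearMap.mem_ker, map_sub, h2, sub_self]
  have hne0 : V p - V q ≠ 0 := by
    intro h
    exact hpq (hVinj p hp q hq (sub_eq_zero.mp h))
  have hle4 : hammingNorm (V p - V q) ≤ 4 := by
    apply TCC.norm_sub_le_four
    · rcases p with ⟨i, j⟩ | ⟨i, d⟩ <;> apply TCC.norm_pair_le
    · rcases q with ⟨i, j⟩ | ⟨i, d⟩ <;> apply TCC.norm_pair_le
  exact ⟨V p - V q, hmem, hne0, le_antisymm hle4 (hdist _ hmem hne0)⟩
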